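/- arXiv:1711.10650 — 2 statements merged into one kernel-verified Lean document; each statement's English description precedes it below -/
import Mathlib

section
/- Let F be a finitely generated module over a principal ideal domain R. Then F decomposes as the direct sum of its torsion submodule and a free module isomorphic to the double dual Hom_R(Hom_R(F,R),R). -/
/-!
Linear forms kill torsion, so `Dual F = Dual (F ⧸ T)` for `T` the torsion submodule.
Over a PID the finitely generated torsion-free module `F ⧸ T` is free, hence reflexive, which
identifies it with the double dual of `F`; being projective, it also splits off: `F ≃ T × F ⧸ T`.
-/

open Module Submodule

noncomputable section

section Torsion

variable {R M : Type*} [CommRing R] [AddCommGroup M] [Module R M]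

theorem Submodule.torsion_le_ker_dual (f : Dual R M) : torsion R M ≤ LinearMap.ker f := by
  rintro x ⟨a, hax⟩
  have : (a : R) * f x = 0 := by
    rw [← smul_eq_mul, ← f.map_smul, ← Submonoid.smul_def, hax, map_zero]
  exact (mem_nonZeroDivisors_iff.mp a.2).1 _ this

def Submodule.dualQuotTorsionEquiv : Dual R (M ⧸ torsion R M) ≃ₗ[R] Dual R M :=
  LinearEquiv.ofBijective (torsion R M).mkQ.dualMap
    ⟨LinearMap.dualMap_injective_of_surjective (torsion R M).mkQ_surjective,
      fun f => ⟨(torsion R M).liftQ f (torsion_le_ker_dual f), by ext; rfl⟩⟩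

end Torsion

def Submodule.equivProdQuotientOfProjective {R M : Type*} [Ring R] [AddCommGroup M]
    [Module R M] (N : Submodule R M) [Projective R (M ⧸ N)] : M ≃ₗ[R] N × (M ⧸ N) :=
  (lequivProdOfRightSplitExact N.injective_subtype (by rw [range_subtype, ker_mkQ])
    (projective_lifting_property N.mkQ LinearMap.id N.mkQ_surjective).choose_spec).symm

def Submodule.quotTorsionEquivDualDual {R M : Type*} [CommRing R] [IsDomain R]
    [IsPrincipalIdealRing R] [AddCommGroup M] [Module R M] [Module.Finite R M] :
    (M ⧸ torsion R M) ≃ₗ[R] Dual R (Dual R M) :=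
  (evalEquiv R _).trans dualQuotTorsionEquiv.symm.dualMap

end

/-- A finitely generated module `F` over a principal ideal domain `R` decomposes
as the direct sum of its torsion submodule and a free module isomorphic to the
double dual `Hom_R(Hom_R(F,R),R)`. -/
theorem stmt_2 (R : Type*) [CommRing R] [IsDomain R] [IsPrincipalIdealRing R]
    (F : Type*) [AddCommGroup F] [Module R F] [Module.Finite R F] :
    Module.Free R (Module.Dual R (Module.Dual R F)) ∧
    Nonempty (F ≃ₗ[R] (Submodule.torsion R F) × Module.Dual R (Module.Dual R F)) :=
  ⟨.of_equiv quotTorsionEquivDualDual,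
    ⟨(torsion R F).equivProdQuotientOfProjective.trans
      ((LinearEquiv.refl R _).prodCongr quotTorsionEquivDualDual)⟩⟩
end

section
/- Let W be the P³-bundle P(V) over an elliptic curve with tautological divisor T and fibre class H, where deg(det V) = 1, so that the intersection numbers satisfy T⁴ = deg V = 1, T³·H = 1, H² = 0. Then for S = Q ∩ X with Q ≡ 2T + (H_η − H_0) numerically equivalent to 2T and X ≡ 3T − H_τ numerically equivalent to 3T − H, one has K_S² = T²·(3T − H)·(2T) = 4 and deg(K_F) = (T + H)·(3T − H)·(2T)·H = 6 for F a fibre, so p_a(F) = 4. -/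
/-- Intersection-theoretic computation on the `ℙ³`-bundle `W = ℙ(V)` over an
elliptic curve with `rank V = 4`, `deg V = 1`: in the Chow ring (a commutative
ring `R` with degree map `dint`), with tautological class `T` and fibre class
`H` satisfying `H² = 0`, `T⁴ = 1`, `T³·H = 1`, for `S = Q ∩ X` with
`Q ∼ 2T`, `X ∼ 3T - H` one has `K_S² = T²·(3T-H)·(2T) = 4` and
`deg K_F = (T+H)·(3T-H)·(2T)·H = 6`, so `p_a(F) = 4`. -/
theorem stmt_13 (R : Type*) [CommRing R] (dint : R →+ ℤ) (T H : R)
    (hH2 : H ^ 2 = 0) (hT4 : dint (T ^ 4) = 1) (hT3H : dint (T ^ 3 * H) = 1) :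
    dint (T ^ 2 * (3 * T - H) * (2 * T)) = 4 ∧
    dint ((T + H) * (3 * T - H) * (2 * T) * H) = 6 ∧
    ∀ pa : ℤ, 2 * pa - 2 = 6 → pa = 4 := by
  refine ⟨?_, ?_, ?_⟩
  · have h1 : T ^ 2 * (3 * T - H) * (2 * T) = (6:ℤ) • T ^ 4 - (2:ℤ) • (T ^ 3 * H) := by
      simp [zsmul_eq_mul]; ring
    rw [h1, map_sub, map_zsmul, map_zsmul, hT4, hT3H]; decide
  · have h2 : (T + H) * (3 * T - H) * (2 * T) * H
        = (6:ℤ) • (T ^ 3 * H) + (4 * T ^ 2 - 2 * T * H) * H ^ 2 := by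
      simp [zsmul_eq_mul]; ring
    rw [h2, hH2, mul_zero, add_zero, map_zsmul, hT3H]; decide
  · intro pa h; omega
end
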